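/- arXiv:1301.6484 — 4 statements merged into one kernel-verified Lean document; each statement's English description precedes it below -/
import Mathlib

section
/- For even n, the number of sequences of length n over A_4 = {-3,-1,+1,+3} that are simultaneously charge-balanced (entries sum to 0) and polarity-balanced (equally many positive and negative entries) equals C(n, n/2)^2. -/
/-!
Every `a ∈ {-3, -1, 1, 3}` is uniquely `2ε + δ` with signs `ε, δ = ±1`, and `a > 0` iff
`ε = 1`.
Recording the positions where `ε = 1` and where `δ = 1` as sets `P`, `Q` identifies sequences
over `{-3, -1, 1, 3}` with pairs of subsets, and the sum becomes `2 (2|P| - n) + (2|Q| - n)`.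
Polarity balance says `2|P| = n`, and then charge balance says `2|Q| = n`.
-/

open Finset

variable {ι : Type*} [Fintype ι] [DecidableEq ι]

theorem sum_ite_mem_neg (P : Finset ι) (a : ℤ) :
    ∑ i, (if i ∈ P then a else -a) = a * (2 * #P - Fintype.card ι) := by
  rw [sum_ite, filter_mem_eq_inter, univ_inter, sum_const, sum_const, filter_not,
    filter_mem_eq_inter, univ_inter, ← compl_eq_univ_sdiff, card_compl]
  simp only [nsmul_eq_mul, Nat.cast_sub (card_le_univ P)]
  ring

namespace Quaternary

def ofSets (P Q : Finset ι) (i : ι) : ℤ :=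
  (if i ∈ P then 2 else -2) + (if i ∈ Q then 1 else -1)

theorem sum_ofSets (P Q : Finset ι) :
    ∑ i, ofSets P Q i = 2 * (2 * #P - Fintype.card ι) + (2 * #Q - Fintype.card ι) := by
  simp only [ofSets, sum_add_distrib, sum_ite_mem_neg]
  ring

theorem filter_pos_ofSets (P Q : Finset ι) : univ.filter (0 < ofSets P Q ·) = P := by
  ext i
  simp only [mem_filter, mem_univ, true_and]
  by_cases hP : i ∈ P <;> by_cases hQ : i ∈ Q <;> simp [ofSets, hP, hQ]

theorem filter_neg_ofSets (P Q : Finset ι) : univ.filter (ofSets P Q · < 0) = Pᶜ := by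
  ext i
  simp only [mem_filter, mem_univ, true_and]
  by_cases hP : i ∈ P <;> by_cases hQ : i ∈ Q <;> simp [ofSets, hP, hQ]

theorem filter_eq_three_or_eq_neg_one_ofSets (P Q : Finset ι) :
    univ.filter (fun i => ofSets P Q i = 3 ∨ ofSets P Q i = -1) = Q := by
  ext i
  simp only [mem_filter, mem_univ, true_and]
  by_cases hP : i ∈ P <;> by_cases hQ : i ∈ Q <;> simp [ofSets, hP, hQ]

theorem ofSets_injective :
    Function.Injective fun PQ : Finset ι × Finset ι => ofSets PQ.1 PQ.2 := by
  rintro ⟨P, Q⟩ ⟨P', Q'⟩ h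
  simp only at h
  rw [Prod.mk.injEq]
  constructor
  · rw [← filter_pos_ofSets P Q, ← filter_pos_ofSets P' Q', h]
  · rw [← filter_eq_three_or_eq_neg_one_ofSets P Q,
      ← filter_eq_three_or_eq_neg_one_ofSets P' Q', h]

theorem piFinset_eq_image_ofSets :
    Fintype.piFinset (fun _ : ι => ({-3, -1, 1, 3} : Finset ℤ)) =
      univ.image fun PQ : Finset ι × Finset ι => ofSets PQ.1 PQ.2 := by
  ext x
  simp only [Fintype.mem_piFinset, mem_image, mem_univ, true_and, Prod.exists]
  constructor
  · intro hx
    refine ⟨univ.filter (0 < x ·), univ.filter (fun i => x i = 3 ∨ x i = -1),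
      funext fun i => ?_⟩
    have := hx i
    simp only [mem_insert, mem_singleton] at this
    rcases this with h | h | h | h <;> simp [ofSets, h]
  · rintro ⟨P, Q, rfl⟩ i
    by_cases hP : i ∈ P <;> by_cases hQ : i ∈ Q <;> simp [ofSets, hP, hQ]

theorem balanced_ofSets_iff (P Q : Finset ι) :
    (∑ i, ofSets P Q i = 0 ∧
        #(univ.filter (0 < ofSets P Q ·)) = #(univ.filter (ofSets P Q · < 0))) ↔
      2 * #P = Fintype.card ι ∧ 2 * #Q = Fintype.card ι := by
  rw [sum_ofSets, filter_pos_ofSets, filter_neg_ofSets, card_compl]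
  have := card_le_univ P
  omega

end Quaternary

open Quaternary

/-- For even `n = 2s`, the number of sequences of length `n` over
`A_4 = {-3,-1,+1,+3}` that are both charge-balanced and polarity-balanced
equals `C(n, n/2)^2`. -/
theorem card_cpb_quaternary (n s : ℕ) (hn : n = 2 * s) :
    ((Fintype.piFinset fun _ : Fin n => ({-3, -1, 1, 3} : Finset ℤ)).filter
        (fun x => (∑ i, x i = 0) ∧
          (Finset.univ.filter fun i => 0 < x i).card =
            (Finset.univ.filter fun i => x i < 0).card)).card =
      (n.choose s) ^ 2 := by
  rw [piFinset_eq_image_ofSets, filter_image, card_image_of_injective _ ofSets_injective]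
  have hbalanced : univ.filter (fun PQ : Finset (Fin n) × Finset (Fin n) =>
      ∑ i, ofSets PQ.1 PQ.2 i = 0 ∧
        #(univ.filter (0 < ofSets PQ.1 PQ.2 ·)) = #(univ.filter (ofSets PQ.1 PQ.2 · < 0))) =
      powersetCard s univ ×ˢ powersetCard s univ := by
    ext ⟨P, Q⟩
    simp only [mem_filter, mem_univ, true_and, balanced_ofSets_iff, mem_product,
      mem_powersetCard, subset_univ, Fintype.card_fin]
    omega
  rw [hbalanced, card_product, card_powersetCard, card_fin, sq]
end

section
/- Let u ∈ A_q^k be a sequence in which the number of nonzero entries is even. For 0 ≤ j ≤ k, let u'_j be u with the first j symbols negated, and let φ(x) = sign(x) ∈ {-1,0,+1}. Then there exists z ∈ {0,1,...,k-1} such that ∑_i φ((u'_z)_i) = 0, i.e., u'_z is polarity-balanced. -/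
/-- The symmetric q-ary PAM alphabet `A_q = {-q+1, -q+3, ..., q-3, q-1}`. -/
def Aq (q : ℕ) : Finset ℤ := (Finset.range q).image fun j : ℕ => (q : ℤ) - 1 - 2 * (j : ℤ)

/-!
Let `g j` be the sign-sum of `u` with its first `j` entries negated. Negating one more entry
changes `g` by `0` or `±2`, and every `g j` has the parity of the number of nonzero entries,
hence is even. Since `g k = -g 0`, this even-valued walk with steps of size at most two
cannot jump over `0`, so it vanishes at some `j < k` (or at `j = 0` when `g 0 = 0`).
-/

open Finset

theorem Int.exists_lt_eq_zero_of_even_of_abs_sub_le_two {g : ℕ → ℤ}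
    (hstep : ∀ j, |g (j + 1) - g j| ≤ 2) (heven : ∀ j, Even (g j)) {n : ℕ}
    (h0 : 0 ≤ g 0) (hn : g n < 0) : ∃ j < n, g j = 0 := by
  induction n with
  | zero => omega
  | succ n ih =>
    rcases lt_trichotomy (g n) 0 with hneg | hzero | hpos
    · obtain ⟨j, hj, hgj⟩ := ih hneg
      exact ⟨j, by omega, hgj⟩
    · exact ⟨n, n.lt_succ_self, hzero⟩
    · -- an even integer can only step from `g n ≥ 2` down to `g (n + 1) ≥ 0`
      obtain ⟨m, hm⟩ := heven n
      have := abs_le.mp (hstep n)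
      omega

theorem Int.exists_le_pred_eq_zero_of_eq_neg {g : ℕ → ℤ}
    (hstep : ∀ j, |g (j + 1) - g j| ≤ 2) (heven : ∀ j, Even (g j)) {n : ℕ}
    (hn : g n = -g 0) : ∃ j ≤ n - 1, g j = 0 := by
  rcases lt_trichotomy (g 0) 0 with hneg | hzero | hpos
  · obtain ⟨j, hj, hgj⟩ := exists_lt_eq_zero_of_even_of_abs_sub_le_two (g := fun j => -g j)
      (fun j => by simpa [abs_sub_comm, neg_add_eq_sub] using hstep j)
      (fun j => (heven j).neg) (n := n) (by simpa using hneg.le) (by simpa [hn] using hneg)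
    exact ⟨j, by omega, neg_eq_zero.mp hgj⟩
  · exact ⟨0, Nat.zero_le _, hzero⟩
  · obtain ⟨j, hj, hgj⟩ := exists_lt_eq_zero_of_even_of_abs_sub_le_two hstep heven (n := n) hpos.le
      (by omega)
    exact ⟨j, by omega, hgj⟩

theorem Int.even_sum_sign_iff {ι : Type*} [Fintype ι] (v : ι → ℤ) :
    Even (∑ i, (v i).sign) ↔ Even #{i | v i ≠ 0} := by
  have hsign : ∀ x : ℤ, (x.sign : ZMod 2) = if x ≠ 0 then 1 else 0 := by
    intro x
    rcases lt_trichotomy x 0 with hx | rfl | hx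
    · simp [Int.sign_eq_neg_one_of_neg hx, hx.ne]
    · simp
    · simp [Int.sign_eq_one_of_pos hx, hx.ne']
  rw [← ZMod.intCast_eq_zero_iff_even, ← ZMod.natCast_eq_zero_iff_even, card_filter]
  push_cast
  simp only [hsign]

def negPrefix {k : ℕ} (z : ℕ) (u : Fin k → ℤ) : Fin k → ℤ :=
  fun i => if (i : ℕ) < z then -u i else u i

def signSum {k : ℕ} (v : Fin k → ℤ) : ℤ := ∑ i, (v i).sign

section

variable {k : ℕ} (u : Fin k → ℤ)

theorem negPrefix_ne_zero_iff (z : ℕ) (i : Fin k) : negPrefix z u i ≠ 0 ↔ u i ≠ 0 := by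
  unfold negPrefix
  split_ifs <;> simp

theorem negPrefix_zero : negPrefix 0 u = u := by
  funext i
  simp [negPrefix]

theorem negPrefix_of_le {z : ℕ} (hz : k ≤ z) : negPrefix z u = -u := by
  ext i
  simp [negPrefix, i.isLt.trans_le hz]

theorem even_signSum_negPrefix (heven : Even #{i | u i ≠ 0}) (z : ℕ) :
    Even (signSum (negPrefix z u)) := by
  rw [signSum, Int.even_sum_sign_iff]
  simpa only [negPrefix_ne_zero_iff] using heven

theorem signSum_negPrefix_of_le {z : ℕ} (hz : k ≤ z) :
    signSum (negPrefix z u) = -signSum u := by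
  simp [signSum, negPrefix_of_le u hz, Int.sign_neg]

theorem abs_signSum_negPrefix_succ_sub_le (j : ℕ) :
    |signSum (negPrefix (j + 1) u) - signSum (negPrefix j u)| ≤ 2 := by
  rcases lt_or_ge j k with hj | hj
  · have hdiff : signSum (negPrefix (j + 1) u) - signSum (negPrefix j u)
        = (-u ⟨j, hj⟩).sign - (u ⟨j, hj⟩).sign := by
      rw [signSum, signSum, ← sum_sub_distrib, sum_eq_single (⟨j, hj⟩ : Fin k)]
      · simp [negPrefix]
      · intro i _ hi
        have : (i : ℕ) ≠ j := fun h => hi (Fin.ext h)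
        simp only [negPrefix, show (i : ℕ) < j + 1 ↔ (i : ℕ) < j by omega, sub_self]
      · simp
    rw [hdiff, Int.sign_neg, abs_le]
    have := Int.sign_trichotomy (u ⟨j, hj⟩)
    omega
  · rw [negPrefix_of_le u hj, negPrefix_of_le u (by omega)]
    simp

end

theorem exists_polarity_balancing_index_general (k : ℕ)
    (u : Fin k → ℤ)
    (heven : Even (Finset.univ.filter fun i : Fin k => u i ≠ 0).card) :
    ∃ z, z ≤ k - 1 ∧
      ∑ i : Fin k, Int.sign (if (i : ℕ) < z then -u i else u i) = 0 := by
  have hends : signSum (negPrefix k u) = -signSum (negPrefix 0 u) := by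
    rw [signSum_negPrefix_of_le u le_rfl, negPrefix_zero]
  exact Int.exists_le_pred_eq_zero_of_eq_neg (g := fun z => signSum (negPrefix z u))
    (abs_signSum_negPrefix_succ_sub_le u) (even_signSum_negPrefix u heven) hends

/-- Polarity-balancing index existence: if the number of nonzero entries of `u`
is even, then negating some prefix of `u` (of length `z ≤ k-1`) makes the sum
of signs zero. -/
theorem exists_polarity_balancing_index (q k : ℕ) (hq : 2 ≤ q)
    (u : Fin k → ℤ) (hu : ∀ i, u i ∈ Aq q)
    (heven : Even (Finset.univ.filter fun i : Fin k => u i ≠ 0).card) :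
    ∃ z, z ≤ k - 1 ∧
      ∑ i : Fin k, Int.sign (if (i : ℕ) < z then -u i else u i) = 0 :=
  exists_polarity_balancing_index_general k u heven
end

section
/- Let q ≥ 2, k ≥ 1, and u ∈ A_q^k, and suppose a charge-balanced sequence of length k over A_q exists (k even if q is even). Define balancing sequences b_i for 0 ≤ i ≤ qk-1 by b_i = (j+2)^g j^{k-g} with j = 2⌊i/k⌋ and g = i - k⌊i/k⌋, and let ⊕ denote coordinatewise integer addition reduced modulo 2q into A_q. Then there exists z ∈ {0,...,qk-1} such that ∑_i (u ⊕ b_z)_i = 0. -/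
/-- Reduction of an integer modulo `2q` to its unique representative in `A_q`
(for integers with the parity of `q-1`). -/
def redAq (q : ℕ) (x : ℤ) : ℤ := (x + q - 1) % (2 * q) - q + 1

/-- The `i`-th balancing sequence `b_i = (j+2)^g j^(k-g)` with `j = 2⌊i/k⌋`
and `g = i mod k`. -/
def bseq (k i : ℕ) : Fin k → ℤ :=
  fun l => if (l : ℕ) < i % k then 2 * (i / k : ℕ) + 2 else 2 * (i / k : ℕ)

section aux

lemma redAq_period (q : ℕ) (x : ℤ) : redAq q (x + 2*q) = redAq q x := by
  unfold redAq
  have h : x + 2*(q:ℤ) + q - 1 = (x + q - 1) + 2*q*1 := by ring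
  rw [h, Int.add_mul_emod_self_left]

lemma redAq_parity (q : ℕ) (x : ℤ) : redAq q x % 2 = x % 2 := by
  unfold redAq
  have h := Int.emod_emod_of_dvd (x + q - 1) (⟨(q:ℤ), rfl⟩ : (2:ℤ) ∣ 2 * q)
  omega

lemma redAq_step (q : ℕ) (hq : 2 ≤ q) (x : ℤ) :
    redAq q (x + 2) = redAq q x + 2 ∨ redAq q (x + 2) = redAq q x + 2 - 2*q := by
  unfold redAq
  have h2q : (0:ℤ) < 2*q := by positivity
  have hr := Int.emod_nonneg (x + q - 1) (by omega : (2*(q:ℤ)) ≠ 0)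
  have hr' := Int.emod_lt_of_pos (x + q - 1) h2q
  have key : (x + 2 + q - 1) % (2*q) = ((x + q - 1) % (2*q) + 2) % (2*q) := by
    conv_lhs => rw [show x + 2 + (q:ℤ) - 1 = (x + q - 1) + 2 by ring]
    rw [Int.add_emod,
      show ((2:ℤ) % (2*q)) = 2 from Int.emod_eq_of_lt (by norm_num) (by push_cast; omega)]
  rcases lt_or_ge ((x + q - 1) % (2*q) + 2) (2*(q:ℤ)) with h | h
  · left
    rw [key, Int.emod_eq_of_lt (by omega) h]; ring
  · right
    have heq : ((x + q - 1) % (2*q) + 2) % (2*q) = (x + q - 1) % (2*q) + 2 - 2*q := by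
      have h1 : ((x + q - 1) % (2*q) + 2) = ((x + q - 1) % (2*q) + 2 - 2*q) + 2*q*1 := by ring
      conv_lhs => rw [h1, Int.add_mul_emod_self_left]
      exact Int.emod_eq_of_lt (by omega) (by omega)
    rw [key, heq]; ring

lemma div_mod_of (k j g : ℕ) (hg : g < k) :
    (j*k+g) / k = j ∧ (j*k+g) % k = g := by
  rw [show j*k+g = k*j+g by ring]
  constructor
  · rw [Nat.mul_add_div (by omega), Nat.div_eq_of_lt hg, add_zero]
  · rw [Nat.mul_add_mod, Nat.mod_eq_of_lt hg]

lemma bseq_succ (k i : ℕ) (hk : 1 ≤ k) (l : Fin k) :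
    bseq k (i+1) l = bseq k i l + (if (l:ℕ) = i % k then 2 else 0) := by
  obtain ⟨j, g, hg, hi⟩ : ∃ j g, g < k ∧ i = j*k+g :=
    ⟨i/k, i%k, Nat.mod_lt _ (by omega), by rw [mul_comm]; exact (Nat.div_add_mod i k).symm⟩
  subst hi
  obtain ⟨hd, hm⟩ := div_mod_of k j g hg
  have hl := l.isLt
  by_cases hgk : g + 1 < k
  · obtain ⟨hd1, hm1⟩ := div_mod_of k j (g+1) hgk
    unfold bseq
    rw [show j*k+g+1 = j*k+(g+1) by omega]
    rw [hd, hm, hd1, hm1]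
    split_ifs <;> omega
  · have hgk' : g + 1 = k := by omega
    obtain ⟨hd1, hm1⟩ := div_mod_of k (j+1) 0 (by omega)
    unfold bseq
    rw [show j*k+g+1 = (j+1)*k+0 by rw [add_mul]; omega]
    rw [hd, hm, hd1, hm1]
    split_ifs <;> push_cast <;> omega

lemma bseq_add_period (q k i : ℕ) (hk : 1 ≤ k) (l : Fin k) :
    bseq k (i + q*k) l = bseq k i l + 2*q := by
  unfold bseq
  rw [Nat.add_mul_div_right _ _ (by omega : 0 < k), Nat.add_mul_mod_self_right]
  split_ifs <;> push_cast <;> ring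

/-- The running sum. -/
def Sfun (q k : ℕ) (u : Fin k → ℤ) (i : ℕ) : ℤ := ∑ l : Fin k, redAq q (u l + bseq k i l)

lemma Sfun_period (q k : ℕ) (hk : 1 ≤ k) (u : Fin k → ℤ) (i : ℕ) :
    Sfun q k u (i + q*k) = Sfun q k u i := by
  unfold Sfun
  refine Finset.sum_congr rfl fun l _ => ?_
  rw [bseq_add_period q k i hk l, show u l + (bseq k i l + 2*(q:ℤ)) = (u l + bseq k i l) + 2*q by ring,
    redAq_period]

lemma Sfun_mod (q k : ℕ) (hk : 1 ≤ k) (hq : 1 ≤ q) (u : Fin k → ℤ) (i : ℕ) :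
    Sfun q k u (i % (q*k)) = Sfun q k u i := by
  have hN : 0 < q*k := Nat.mul_pos hq hk
  have key : ∀ c j, Sfun q k u (j + c*(q*k)) = Sfun q k u j := by
    intro c
    induction c with
    | zero => simp
    | succ c ih =>
        intro j
        rw [show j + (c+1)*(q*k) = (j + c*(q*k)) + q*k by ring, Sfun_period q k hk, ih]
  conv_rhs => rw [show i = i % (q*k) + (i/(q*k))*(q*k) from (Nat.mod_add_div' i (q*k)).symm]
  rw [key]

lemma Sfun_step (q k : ℕ) (hq : 2 ≤ q) (hk : 1 ≤ k) (u : Fin k → ℤ) (i : ℕ) :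
    Sfun q k u (i+1) = Sfun q k u i + 2 ∨ Sfun q k u (i+1) = Sfun q k u i + 2 - 2*q := by
  set m : Fin k := ⟨i % k, Nat.mod_lt _ (by omega)⟩ with hm
  have hdiff : Sfun q k u (i+1) - Sfun q k u i
      = redAq q (u m + bseq k i m + 2) - redAq q (u m + bseq k i m) := by
    unfold Sfun
    rw [← Finset.sum_sub_distrib]
    rw [Fintype.sum_eq_single m]
    · rw [bseq_succ k i hk m, if_pos rfl, ← add_assoc]
    · intro l hl
      rw [bseq_succ k i hk l, if_neg (fun hc => hl (Fin.ext hc)), add_zero, sub_self]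
  rcases redAq_step q hq (u m + bseq k i m) with h | h
  · left; omega
  · right; omega

lemma Sfun_parity (q k : ℕ) (hq : 2 ≤ q) (hk : 1 ≤ k) (hpar : Even q → Even k)
    (u : Fin k → ℤ) (hu : ∀ l, u l ∈ Aq q) (i : ℕ) :
    Sfun q k u i % 2 = 0 := by
  unfold Sfun
  rw [Finset.sum_int_mod]
  have hterm : ∀ l : Fin k, redAq q (u l + bseq k i l) % 2 = ((q:ℤ)+1) % 2 := by
    intro l
    rw [redAq_parity]
    obtain ⟨m, _, hul⟩ := Finset.mem_image.mp (hu l)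
    have hb : bseq k i l = 2*(i/k : ℕ) ∨ bseq k i l = 2*(i/k : ℕ) + 2 := by
      unfold bseq; split_ifs <;> simp
    omega
  rw [Finset.sum_congr rfl (fun l _ => hterm l), Finset.sum_const, Finset.card_univ,
    Fintype.card_fin, nsmul_eq_mul]
  rcases Nat.even_or_odd q with hqe | hqo
  · obtain ⟨c, hc⟩ := hpar hqe
    obtain ⟨d, hd⟩ := hqe
    have ht : ((q:ℤ)+1) % 2 = 1 := by subst hd; push_cast; omega
    rw [ht, mul_one]
    subst hc; push_cast; omega
  · have ht : ((q:ℤ)+1) % 2 = 0 := by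
      obtain ⟨d, hd⟩ := hqo; subst hd; push_cast; omega
    rw [ht, mul_zero]
    norm_num

lemma sum_shift (n : ℕ) (f : ℕ → ℤ) (h : f n = f 0) :
    ∑ j ∈ Finset.range n, f (j+1) = ∑ j ∈ Finset.range n, f j := by
  have h1 := Finset.sum_range_succ' f n
  have h2 := Finset.sum_range_succ f n
  omega

lemma emod_sum (q : ℕ) (hq : 1 ≤ q) (m : ℕ) :
    ∑ j ∈ Finset.range q, ((2*(m:ℤ) + 2*j) % (2*q)) = q*(q-1) := by
  induction m with
  | zero =>
      have base : ∀ n : ℕ, n ≤ q → ∑ j ∈ Finset.range n, ((2*((0:ℕ):ℤ) + 2*j) % (2*q)) =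
          ∑ j ∈ Finset.range n, 2*(j:ℤ) := by
        intro n hn
        refine Finset.sum_congr rfl fun j hj => ?_
        have hj' := Finset.mem_range.mp hj
        rw [Nat.cast_zero, mul_zero, zero_add]
        exact Int.emod_eq_of_lt (by positivity) (by push_cast; omega)
      rw [base q le_rfl]
      clear base
      induction q with
      | zero => simp
      | succ n ih =>
          rcases Nat.eq_zero_or_pos n with h | h
          · subst h; simp
          · rw [Finset.sum_range_succ, ih h]; push_cast; ring
  | succ m ih =>
      have hf0 : ((fun j : ℕ => (2*(m:ℤ) + 2*(j:ℕ)) % (2*q)) q)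
          = ((fun j : ℕ => (2*(m:ℤ) + 2*(j:ℕ)) % (2*q)) 0) := by
        show (2*(m:ℤ) + 2*(q:ℕ)) % (2*q) = (2*(m:ℤ) + 2*((0:ℕ):ℤ)) % (2*q)
        rw [show 2*(m:ℤ) + 2*((q:ℕ):ℤ) = (2*(m:ℤ) + 2*((0:ℕ):ℤ)) + 2*q*1 by push_cast; ring,
          Int.add_mul_emod_self_left]
      calc ∑ j ∈ Finset.range q, (2*((m+1:ℕ):ℤ) + 2*j) % (2*q)
          = ∑ j ∈ Finset.range q, (fun j : ℕ => (2*(m:ℤ) + 2*(j:ℕ)) % (2*q)) (j+1) := by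
            refine Finset.sum_congr rfl fun j _ => ?_
            show (2*((m+1:ℕ):ℤ) + 2*j) % (2*q) = (2*(m:ℤ) + 2*((j+1:ℕ):ℤ)) % (2*q)
            push_cast; ring_nf
        _ = ∑ j ∈ Finset.range q, (2*(m:ℤ) + 2*(j:ℕ)) % (2*q) :=
            by exact sum_shift q (fun j : ℕ => (2*(m:ℤ) + 2*(j:ℕ)) % (2*q)) hf0
        _ = q*(q-1) := ih

lemma T_zero (q k : ℕ) (hq : 2 ≤ q) (u : Fin k → ℤ) (hu : ∀ l, u l ∈ Aq q) (l : Fin k) :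
    ∑ j ∈ Finset.range q, redAq q (u l + 2*(j:ℤ)) = 0 := by
  obtain ⟨m, hmq, hul⟩ := Finset.mem_image.mp (hu l)
  have hmq' := Finset.mem_range.mp hmq
  set M : ℕ := q - 1 - m with hM
  have hMc : (M:ℤ) = (q:ℤ) - 1 - m := by rw [hM]; push_cast; omega
  have hterm : ∀ j ∈ Finset.range q, redAq q (u l + 2*(j:ℤ))
      = (2*(M:ℤ) + 2*j) % (2*q) + (1 - q) := by
    intro j _
    unfold redAq
    rw [show u l + 2*(j:ℤ) + q - 1 = 2*(M:ℤ) + 2*j by omega]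
    ring
  rw [Finset.sum_congr rfl hterm, Finset.sum_add_distrib, emod_sum q (by omega) M,
    Finset.sum_const, Finset.card_range]
  push_cast
  ring

lemma shift_T_zero (q k : ℕ) (hq : 2 ≤ q) (u : Fin k → ℤ) (hu : ∀ l, u l ∈ Aq q) (l : Fin k) :
    ∑ j ∈ Finset.range q, redAq q (u l + (2*(j:ℤ) + 2)) = 0 := by
  have hstep : ∀ j ∈ Finset.range q, redAq q (u l + (2*(j:ℤ) + 2))
      = (fun j : ℕ => redAq q (u l + 2*(j:ℤ))) (j+1) := by
    intro j _; simp only []; push_cast; ring_nf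
  rw [Finset.sum_congr rfl hstep,
    sum_shift q (fun j : ℕ => redAq q (u l + 2*(j:ℤ)))]
  · exact T_zero q k hq u hu l
  · show redAq q (u l + 2*((q:ℕ):ℤ)) = redAq q (u l + 2*((0:ℕ):ℤ))
    rw [show u l + 2*((q:ℕ):ℤ) = (u l + 2*((0:ℕ):ℤ)) + 2*q by push_cast; ring, redAq_period]

lemma sum_range_mul (a b : ℕ) (f : ℕ → ℤ) :
    ∑ i ∈ Finset.range (a*b), f i = ∑ j ∈ Finset.range a, ∑ g ∈ Finset.range b, f (j*b+g) := by
  induction a with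
  | zero => simp
  | succ a ih =>
      rw [show (a+1)*b = a*b + b by ring, Finset.sum_range_add, ih, Finset.sum_range_succ]

lemma col_sum (q k : ℕ) (hq : 2 ≤ q) (hk : 1 ≤ k) (u : Fin k → ℤ) (hu : ∀ l, u l ∈ Aq q)
    (l : Fin k) :
    ∑ i ∈ Finset.range (q*k), redAq q (u l + bseq k i l) = 0 := by
  rw [sum_range_mul q k (fun i => redAq q (u l + bseq k i l))]
  have hl := l.isLt
  have inner : ∀ j ∈ Finset.range q,
      ∑ g ∈ Finset.range k, redAq q (u l + bseq k (j*k+g) l)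
      = (k - (l:ℕ) - 1) * redAq q (u l + (2*(j:ℤ) + 2)) + ((l:ℕ)+1) * redAq q (u l + 2*(j:ℤ)) := by
    intro j _
    have hterm : ∀ g ∈ Finset.range k, redAq q (u l + bseq k (j*k+g) l)
        = if (l:ℕ) < g then redAq q (u l + (2*(j:ℤ) + 2)) else redAq q (u l + 2*(j:ℤ)) := by
      intro g hg
      obtain ⟨hd, hm⟩ := div_mod_of k j g (Finset.mem_range.mp hg)
      unfold bseq
      rw [hd, hm]
      split_ifs <;> ring_nf
    rw [Finset.sum_congr rfl hterm, Finset.sum_ite]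
    have hf1 : (Finset.range k).filter (fun g => (l:ℕ) < g) = Finset.Ico ((l:ℕ)+1) k := by
      ext g; simp [Finset.mem_filter, Finset.mem_range, Finset.mem_Ico]; omega
    have hf2 : (Finset.range k).filter (fun g => ¬ (l:ℕ) < g) = Finset.range ((l:ℕ)+1) := by
      ext g; simp [Finset.mem_filter, Finset.mem_range]; omega
    rw [hf1, hf2, Finset.sum_const, Finset.sum_const, Finset.card_range, Nat.card_Ico,
      nsmul_eq_mul, nsmul_eq_mul,
      show (((k - ((l:ℕ)+1)) : ℕ) : ℤ) = (k:ℤ) - ((l:ℕ):ℤ) - 1 by omega]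
    push_cast
    ring
  rw [Finset.sum_congr rfl inner, Finset.sum_add_distrib, ← Finset.mul_sum, ← Finset.mul_sum,
    shift_T_zero q k hq u hu l, T_zero q k hq u hu l]
  ring

lemma sum_Sfun_zero (q k : ℕ) (hq : 2 ≤ q) (hk : 1 ≤ k) (u : Fin k → ℤ)
    (hu : ∀ l, u l ∈ Aq q) :
    ∑ i ∈ Finset.range (q*k), Sfun q k u i = 0 := by
  unfold Sfun
  rw [Finset.sum_comm]
  rw [Finset.sum_congr rfl (fun l _ => col_sum q k hq hk u hu l)]
  simp

lemma exists_cross (S : ℕ → ℤ) (a b : ℕ) (hab : a ≤ b) (ha : S a < 0) (hb : 0 ≤ S b) :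
    ∃ m, S m < 0 ∧ 0 ≤ S (m+1) := by
  have hP : ∃ n, 0 ≤ S (a + n) := ⟨b - a, by rwa [Nat.add_sub_cancel' hab]⟩
  have hn0 : 0 ≤ S (a + Nat.find hP) := Nat.find_spec hP
  have hpos : Nat.find hP ≠ 0 := by
    intro h
    rw [h, add_zero] at hn0
    omega
  refine ⟨a + (Nat.find hP - 1), ?_, ?_⟩
  · have := Nat.find_min hP (m := Nat.find hP - 1) (by omega)
    omega
  · rwa [show a + (Nat.find hP - 1) + 1 = a + Nat.find hP by omega]

end aux

/-- Swart–Weber charge-balancing index existence: for every `u ∈ A_q^k`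
(with `k` even if `q` is even) there exists `z ∈ {0,…,qk-1}` such that
`u ⊕_{2q} b_z` is charge-balanced. -/
theorem exists_charge_balancing_index (q k : ℕ) (hq : 2 ≤ q) (hk : 1 ≤ k)
    (hpar : Even q → Even k)
    (u : Fin k → ℤ) (hu : ∀ l, u l ∈ Aq q) :
    ∃ z < q * k, ∑ l : Fin k, redAq q (u l + bseq k z l) = 0 := by
  have hN : 0 < q * k := Nat.mul_pos (by omega) hk
  by_contra hcon
  push_neg at hcon
  have hcon' : ∀ z, z < q * k → Sfun q k u z ≠ 0 := fun z hz => hcon z hz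
  have hsum := sum_Sfun_zero q k hq hk u hu
  -- there is a negative value
  have hexneg : ∃ a, a < q*k ∧ Sfun q k u a < 0 := by
    by_contra h'
    push_neg at h'
    have : 0 < ∑ i ∈ Finset.range (q*k), Sfun q k u i := by
      refine Finset.sum_pos (fun i hi => ?_) ⟨0, Finset.mem_range.mpr hN⟩
      have hi' := Finset.mem_range.mp hi
      have := h' i hi'
      have := hcon' i hi'
      omega
    omega
  have hexpos : ∃ b, b < q*k ∧ 0 < Sfun q k u b := by
    by_contra h'
    push_neg at h'
    have : ∑ i ∈ Finset.range (q*k), Sfun q k u i < 0 := by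
      refine Finset.sum_neg (fun i hi => ?_) ⟨0, Finset.mem_range.mpr hN⟩
      have hi' := Finset.mem_range.mp hi
      have := h' i hi'
      have := hcon' i hi'
      omega
    omega
  obtain ⟨a, haN, ha⟩ := hexneg
  obtain ⟨b, hbN, hb⟩ := hexpos
  set b' := if a ≤ b then b else b + q*k with hb'def
  have hab : a ≤ b' := by
    rw [hb'def]; split_ifs with h <;> omega
  have hb' : 0 ≤ Sfun q k u b' := by
    rw [hb'def]; split_ifs with h
    · omega
    · rw [Sfun_period q k hk]; omega
  obtain ⟨m, hm1, hm2⟩ := exists_cross (Sfun q k u) a b' hab ha hb'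
  have hstep := Sfun_step q k hq hk u m
  have hmeven := Sfun_parity q k hq hk hpar u hu m
  have hm1even := Sfun_parity q k hq hk hpar u hu (m+1)
  have hzero : Sfun q k u (m+1) = 0 := by omega
  refine hcon' ((m+1) % (q*k)) (Nat.mod_lt _ hN) ?_
  rw [Sfun_mod q k hk (by omega) u (m+1)]
  exact hzero
end

section
/- A cyclic discrete intermediate value theorem with even steps: let g : ℤ/Nℤ → 2ℤ take even integer values such that consecutive values differ by +2 or by -2q+2 (for some q ≥ 2), and suppose the average of g over some q equally spaced points is 0. Then g attains the value 0. -/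
/-!
All steps are even, so the walk stays even; and no step goes up by more than `2`. Hence, if the
walk avoids `0`, it can never climb from a negative value back to a positive one: from `-2` the
only way up lands on `0`. If it starts negative, all values are negative; if it starts positive,
a later negative value would persist up to `g N = g 0 > 0`, so all values are positive. Either way
the `q` sampled values cannot sum to `0`.
-/

theorem even_of_even_sub_succ {g : ℕ → ℤ} {n : ℕ} (h0 : Even (g 0))
    (hstep : ∀ i < n, Even (g (i + 1) - g i)) : ∀ i ≤ n, Even (g i) := by
  intro i hi
  induction i with
  | zero => exact h0
  | succ i ih =>
    have hi' : i < n := hi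
    simpa using (hstep i hi').add (ih hi'.le)

section Walk

variable {g : ℕ → ℤ} {n : ℕ} (hev : ∀ i ≤ n, Even (g i)) (hup : ∀ i < n, g (i + 1) ≤ g i + 2)
  (hne : ∀ i ≤ n, g i ≠ 0)
include hev hup hne

theorem neg_of_neg_of_le {m k : ℕ} (hmk : m ≤ k) (hkn : k ≤ n) (hm : g m < 0) : g k < 0 := by
  induction k, hmk using Nat.le_induction with
  | base => exact hm
  | succ k _ ih =>
    have hk : k < n := hkn
    obtain ⟨a, ha⟩ := hev k hk.le
    obtain ⟨b, hb⟩ := hev (k + 1) hkn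
    have := hup k hk
    have := hne (k + 1) hkn
    have := ih hk.le
    omega

theorem pos_of_pos_of_cyclic (hcyc : g n = g 0) (h0 : 0 < g 0) {i : ℕ} (hi : i ≤ n) :
    0 < g i := by
  refine (hne i hi).lt_or_gt.resolve_left fun hneg => ?_
  have := neg_of_neg_of_le hev hup hne hi le_rfl hneg
  omega

end Walk

theorem cyclic_discrete_ivt_general (N q d : ℕ) (hN : 0 < N)
    (hd : N = q * d) (g : ℕ → ℤ) (heven : Even (g 0)) (hcyc : g N = g 0)
    (hstep : ∀ i < N, g (i + 1) = g i + 2 ∨ g (i + 1) = g i - 2 * q + 2)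
    (havg : ∑ j ∈ Finset.range q, g (j * d) = 0) :
    ∃ i < N, g i = 0 := by
  by_contra! hcon
  have hne : ∀ i ≤ N, g i ≠ 0 := fun i hi =>
    hi.lt_or_eq.elim (hcon i) fun h => h ▸ hcyc ▸ hcon 0 hN
  have hev : ∀ i ≤ N, Even (g i) := even_of_even_sub_succ heven fun i hi => by
    rcases hstep i hi with h | h <;> rw [h]
    exacts [⟨1, by ring⟩, ⟨1 - q, by ring⟩]
  have hup : ∀ i < N, g (i + 1) ≤ g i + 2 := fun i hi => by
    rcases hstep i hi with h | h <;> omega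
  have hnodes : ∀ j ∈ Finset.range q, j * d ≤ N := fun j hj =>
    hd ▸ Nat.mul_le_mul_right d (Finset.mem_range.mp hj).le
  have hq : (Finset.range q).Nonempty :=
    Finset.nonempty_range_iff.mpr (Nat.pos_of_mul_pos_right (hd ▸ hN)).ne'
  rcases (hne 0 N.zero_le).lt_or_gt with h0 | h0
  · exact (Finset.sum_neg (fun j hj => neg_of_neg_of_le hev hup hne (Nat.zero_le _)
      (hnodes j hj) h0) hq).ne havg
  · exact (Finset.sum_pos (fun j hj => pos_of_pos_of_cyclic hev hup hne hcyc h0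
      (hnodes j hj)) hq).ne' havg

/-- Cyclic discrete intermediate value theorem with even steps: a cyclic
even-integer-valued walk of length `N = q*d` with steps `+2` or `-2q+2`,
whose average over the `q` equally spaced points `j*d` is zero, attains
the value `0`. -/
theorem cyclic_discrete_ivt (N q d : ℕ) (hq : 2 ≤ q) (hN : 0 < N)
    (hd : N = q * d) (g : ℕ → ℤ) (heven : Even (g 0)) (hcyc : g N = g 0)
    (hstep : ∀ i < N, g (i + 1) = g i + 2 ∨ g (i + 1) = g i - 2 * q + 2)
    (havg : ∑ j ∈ Finset.range q, g (j * d) = 0) :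
    ∃ i < N, g i = 0 :=
  cyclic_discrete_ivt_general N q d hN hd g heven hcyc hstep havg
end
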